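/- Let m be a positive integer and let H be a subgroup of (ℤ/mℤ)ˣ containing the class of −1. Then the subgroup of SL(2,ℤ) generated by the matrix with rows (1, 0) and (m, 1), the matrix −I (the negative of the identity), and all matrices in SL(2,ℤ) with top row (c, a) and bottom row (d, b) satisfying a > 0, m ∣ d, and (b mod m) ∈ H, is exactly the set of all matrices in Γ₀(m) whose lower-right entry reduces modulo m to an element of H. -/

import Mathlib

/-!
Both sides contain `-1` and `T = [[1, 1], [0, 1]]`. An element `A` of `Γ_H(m)` whose top-right
entry is nonzero is a generator up to sign. If the top-right entry vanishes, then
`det A = A₀₀ A₁₁ = 1` forces `A₀₀ ≠ 0`, so `A T` has nonzero top-right entry `A₀₀` and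
`A = (A T) T⁻¹`.
-/

open Matrix CongruenceSubgroup
open scoped MatrixGroups

namespace Matrix.SpecialLinearGroup

theorem mem_closure_of_apply_zero_one_ne_zero {K : Subgroup SL(2, ℤ)} (hneg : -1 ∈ K)
    {A : SL(2, ℤ)} (hA : A ∈ K) (h : A 0 1 ≠ 0) :
    A ∈ Subgroup.closure ({-1} ∪ {B | 0 < B 0 1 ∧ B ∈ K} : Set SL(2, ℤ)) := by
  rcases h.lt_or_gt with hlt | hgt
  · have hnegA : -A ∈ Subgroup.closure ({-1} ∪ {B | 0 < B 0 1 ∧ B ∈ K} : Set SL(2, ℤ)) :=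
      Subgroup.subset_closure (Or.inr ⟨by simpa using hlt, by simpa using K.mul_mem hneg hA⟩)
    rw [← neg_neg A, ← neg_one_mul (-A)]
    exact Subgroup.mul_mem _ (Subgroup.subset_closure (Or.inl rfl)) hnegA
  · exact Subgroup.subset_closure (Or.inr ⟨hgt, hA⟩)

theorem closure_neg_one_union_pos_eq {K : Subgroup SL(2, ℤ)} (hneg : -1 ∈ K)
    (hT : ModularGroup.T ∈ K) :
    Subgroup.closure ({-1} ∪ {B | 0 < B 0 1 ∧ B ∈ K} : Set SL(2, ℤ)) = K := by
  refine le_antisymm ?_ fun A hA => ?_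
  · rw [Subgroup.closure_le]
    rintro B (rfl | ⟨-, hB⟩)
    exacts [hneg, hB]
  by_cases h : A 0 1 = 0
  · have hdet : A 0 0 * A 1 1 = 1 := by
      simpa [h] using (Matrix.det_fin_two A.1).symm.trans A.det_coe
    have hAT : (A * ModularGroup.T) 0 1 = A 0 0 := by
      simp [Matrix.mul_apply, Fin.sum_univ_two, h]
    have hAT_mem := mem_closure_of_apply_zero_one_ne_zero hneg (K.mul_mem hA hT)
      (hAT ▸ left_ne_zero_of_mul_eq_one hdet)
    have hT_mem := mem_closure_of_apply_zero_one_ne_zero hneg hT (by simp)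
    simpa using Subgroup.mul_mem _ hAT_mem (Subgroup.inv_mem _ hT_mem)
  · exact mem_closure_of_apply_zero_one_ne_zero hneg hA h

end Matrix.SpecialLinearGroup

namespace CongruenceSubgroup

def GammaH (m : ℕ) (H : Subgroup (ZMod m)ˣ) : Subgroup SL(2, ℤ) :=
  (H.comap (Gamma0Map m).toHomUnits).map (Gamma0 m).subtype

variable {m : ℕ} {H : Subgroup (ZMod m)ˣ}

theorem mem_GammaH {A : SL(2, ℤ)} :
    A ∈ GammaH m H ↔ (m : ℤ) ∣ A 1 0 ∧ ∃ u ∈ H, (u : ZMod m) = ((A 1 1 : ℤ) : ZMod m) := by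
  simp only [← ZMod.intCast_zmod_eq_zero_iff_dvd, ← Gamma0_mem]
  constructor
  · rintro ⟨g, hg, rfl⟩
    exact ⟨g.2, _, hg, rfl⟩
  · rintro ⟨hA, u, hu, hu_eq⟩
    have hA_unit : (Gamma0Map m).toHomUnits ⟨A, hA⟩ = u := Units.ext hu_eq.symm
    exact ⟨⟨A, hA⟩, (hA_unit.symm ▸ hu : _ ∈ H), rfl⟩

theorem neg_one_mem_GammaH (hneg : (-1 : (ZMod m)ˣ) ∈ H) : -1 ∈ GammaH m H :=
  mem_GammaH.2 ⟨by simp, -1, hneg, by simp⟩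

theorem T_mem_GammaH : ModularGroup.T ∈ GammaH m H :=
  mem_GammaH.2 ⟨by simp [ModularGroup.T], 1, H.one_mem, by simp [ModularGroup.T]⟩

theorem lowerUnipotent_mem_GammaH :
    (⟨!![1, 0; (m : ℤ), 1], by norm_num [Matrix.det_fin_two_of]⟩ : SL(2, ℤ)) ∈ GammaH m H :=
  mem_GammaH.2 ⟨by simp, 1, H.one_mem, by simp⟩

theorem closure_lowerUnipotent_neg_one_pos_eq_GammaH (hneg : (-1 : (ZMod m)ˣ) ∈ H) :
    Subgroup.closure ({⟨!![1, 0; (m : ℤ), 1], by norm_num [Matrix.det_fin_two_of]⟩} ∪ {-1} ∪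
      {A | 0 < A 0 1 ∧ A ∈ GammaH m H} : Set SL(2, ℤ)) = GammaH m H := by
  refine le_antisymm ?_ ?_
  · rw [Subgroup.closure_le]
    rintro B ((rfl | rfl) | ⟨-, hB⟩)
    exacts [lowerUnipotent_mem_GammaH, neg_one_mem_GammaH hneg, hB]
  · calc GammaH m H
        = Subgroup.closure ({-1} ∪ {A | 0 < A 0 1 ∧ A ∈ GammaH m H} : Set SL(2, ℤ)) :=
          (SpecialLinearGroup.closure_neg_one_union_pos_eq (neg_one_mem_GammaH hneg)
            T_mem_GammaH).symm
      _ ≤ _ := Subgroup.closure_mono (Set.union_subset_union_left _ Set.subset_union_right)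

end CongruenceSubgroup

/-- For `m > 0` and a subgroup `H` of `(ℤ/mℤ)ˣ` containing `-1`, the subgroup of `SL(2,ℤ)`
generated by `[[1,0],[m,1]]`, `-I`, and all matrices `[[c,a],[d,b]]` in `SL(2,ℤ)` with `a > 0`,
`m ∣ d` and `(b mod m) ∈ H`, is exactly the set of matrices of `Γ₀(m)` whose lower-right entry
reduces mod `m` to an element of `H`. -/
theorem stmt2 (m : ℕ) (H : Subgroup (ZMod m)ˣ)
    (hneg : (-1 : (ZMod m)ˣ) ∈ H) :
    (Subgroup.closure
        (({(⟨!![1, 0; (m : ℤ), 1], by norm_num [Matrix.det_fin_two_of]⟩ :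
              SpecialLinearGroup (Fin 2) ℤ)} :
            Set (SpecialLinearGroup (Fin 2) ℤ))
          ∪ {(⟨(-1 : Matrix (Fin 2) (Fin 2) ℤ), by
                norm_num [Matrix.det_neg, Fintype.card_fin]⟩ :
              SpecialLinearGroup (Fin 2) ℤ)}
          ∪ {A : SpecialLinearGroup (Fin 2) ℤ |
              0 < A 0 1 ∧ (m : ℤ) ∣ A 1 0 ∧
                ∃ u ∈ H, ((u : (ZMod m)ˣ) : ZMod m) = ((A 1 1 : ℤ) : ZMod m)}) :
        Set (SpecialLinearGroup (Fin 2) ℤ))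
      = {A : SpecialLinearGroup (Fin 2) ℤ |
          (m : ℤ) ∣ A 1 0 ∧
            ∃ u ∈ H, ((u : (ZMod m)ˣ) : ZMod m) = ((A 1 1 : ℤ) : ZMod m)} := by
  have hGammaH : {A : SL(2, ℤ) | (m : ℤ) ∣ A 1 0 ∧
      ∃ u ∈ H, (u : ZMod m) = ((A 1 1 : ℤ) : ZMod m)} = GammaH m H :=
    Set.ext fun _ => mem_GammaH.symm
  have hPos : {A : SL(2, ℤ) | 0 < A 0 1 ∧ (m : ℤ) ∣ A 1 0 ∧
      ∃ u ∈ H, (u : ZMod m) = ((A 1 1 : ℤ) : ZMod m)} = {A | 0 < A 0 1 ∧ A ∈ GammaH m H} := by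
    simp only [mem_GammaH]
  rw [hPos, hGammaH]
  exact congrArg SetLike.coe (closure_lowerUnipotent_neg_one_pos_eq_GammaH hneg)
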